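/- arXiv:math-ph/0402033 — 7 statements merged into one kernel-verified Lean document; each statement's English description precedes it below -/
import Mathlib

section
/- Let n ≥ 1 and let G be an n×n symmetric matrix with complex entries such that every diagonal entry equals 2 and the rank of G is at most 2. Then there exist complex numbers φ_1, …, φ_n such that G_{ij} = 2 cos(φ_i − φ_j) for all i, j. -/
/-!
For a nonzero diagonal entry `G q q`, subtracting `(G q q)⁻¹ G_{·q} G_{q·}` lowers the rank, leaving
a symmetric matrix of rank at most one, i.e. `w wᵀ`; hence `G = x xᵀ + w wᵀ`. A sum of two squares
factors: `x xᵀ + w wᵀ = u vᵀ + v uᵀ` with `u = (x + i w) / 2`, `v = x - i w`. The diagonal forces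
`u_i v_i = 1`, and writing `u_i = exp (i φ_i)` gives `G_ij = u_i / u_j + u_j / u_i = 2 cos (φ_i - φ_j)`.
-/

open Matrix Complex

namespace Matrix

variable {K n : Type*} [Field K] [Fintype n]

theorem exists_eq_vecMulVec_of_rank_le_one {m : Type*} {A : Matrix m n K} (h : A.rank ≤ 1) :
    ∃ (u : m → K) (v : n → K), A = vecMulVec u v := by
  classical
  obtain ⟨w, hw⟩ := finrank_le_one_iff.mp h
  choose v hv using fun j => hw ⟨A.col j, Pi.single j 1, mulVec_single_one A j⟩
  refine ⟨w, v, ext fun i j => ?_⟩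
  simpa [vecMulVec_apply, mul_comm] using congrFun (congrArg Subtype.val (hv j)) i |>.symm

/-- Wedderburn's rank-one reduction: row `i` of the difference vanishes, so column `j` of `A`
drops out of the column space. -/
theorem rank_sub_smul_vecMulVec_col_row_lt {m : Type*} [Fintype m] {A : Matrix m n K} {i : m}
    {j : n} (hij : A i j ≠ 0) :
    (A - (A i j)⁻¹ • vecMulVec (A.col j) (A.row i)).rank < A.rank := by
  classical
  set B := A - (A i j)⁻¹ • vecMulVec (A.col j) (A.row i)
  have hfactor : B = A * (1 - (A i j)⁻¹ • vecMulVec (Pi.single j 1) (A.row i)) := by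
    rw [Matrix.mul_sub, Matrix.mul_one, Matrix.mul_smul, mul_vecMulVec, mulVec_single_one]
  have hrow : ∀ x, (B *ᵥ x) i = 0 := fun x => by
    simp [B, mulVec, dotProduct, vecMulVec_apply, hij]
  have hle : LinearMap.range B.mulVecLin ≤ LinearMap.range A.mulVecLin := by
    rw [hfactor, mulVecLin_mul]
    exact LinearMap.range_comp_le_range _ _
  have hcol : A.col j ∉ LinearMap.range B.mulVecLin := by
    rintro ⟨x, hx⟩
    exact hij (by simpa [hrow] using (congrFun hx i).symm)
  have hcolA : A.col j ∈ LinearMap.range A.mulVecLin := ⟨Pi.single j 1, mulVec_single_one A j⟩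
  exact Submodule.finrank_lt_finrank_of_lt <|
    SetLike.lt_iff_le_and_exists.mpr ⟨hle, A.col j, hcolA, hcol⟩

variable [IsAlgClosed K]

theorem IsSymm.exists_eq_vecMulVec_self_of_rank_le_one {A : Matrix n n K}
    (hA : A.IsSymm) (h : A.rank ≤ 1) : ∃ w : n → K, A = vecMulVec w w := by
  obtain ⟨u, v, rfl⟩ := exists_eq_vecMulVec_of_rank_le_one h
  have hsymm (i j : n) : u i * v j = u j * v i := by
    simpa [vecMulVec_apply] using congrFun (congrFun hA j) i
  by_cases hdiag : ∀ q, u q * v q = 0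
  · refine ⟨0, Matrix.ext fun i j => ?_⟩
    have : (u i * v j) ^ 2 = 0 := by
      linear_combination (u i * v j) * hsymm i j + (u j * v j) * hdiag i
    simpa [vecMulVec_apply] using this
  push Not at hdiag
  obtain ⟨q, hq⟩ := hdiag
  obtain ⟨s, hs⟩ := IsAlgClosed.exists_pow_nat_eq (u q * v q) two_pos
  have hs0 : s ≠ 0 := by rintro rfl; exact hq (by simpa using hs.symm)
  refine ⟨fun i => u i * v q / s, Matrix.ext fun i j => ?_⟩
  rw [vecMulVec_apply, vecMulVec_apply, div_mul_div_comm, ← sq, hs, eq_div_iff hq]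
  linear_combination (u i * v q) * hsymm q j

theorem IsSymm.exists_eq_vecMulVec_add_vecMulVec_of_rank_le_two [NeZero (2 : K)]
    {A : Matrix n n K} (hA : A.IsSymm) (h : A.rank ≤ 2) {q : n} (hq : A q q ≠ 0) :
    ∃ u v : n → K, A = vecMulVec u v + vecMulVec v u := by
  have hcol : A.col q = A.row q := by rw [col, hA.eq]; rfl
  have hB : (A - (A q q)⁻¹ • vecMulVec (A.row q) (A.row q)).rank ≤ 1 := by
    have hlt := rank_sub_smul_vecMulVec_col_row_lt hq
    rw [hcol] at hlt
    omega
  obtain ⟨w, hw⟩ := (hA.sub <| IsSymm.smul (transpose_vecMulVec _ _) _)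
    |>.exists_eq_vecMulVec_self_of_rank_le_one hB
  obtain ⟨s, hs⟩ := IsAlgClosed.exists_pow_nat_eq (A q q)⁻¹ two_pos
  obtain ⟨ι, hι⟩ := IsAlgClosed.exists_pow_nat_eq (-1 : K) two_pos
  refine ⟨(2 : K)⁻¹ • (s • A.row q + ι • w), s • A.row q - ι • w, Matrix.ext fun i j => ?_⟩
  have hBij := congrFun (congrFun hw i) j
  simp only [sub_apply, smul_apply, vecMulVec_apply, row_apply, smul_eq_mul, smul_add, add_apply,
    Pi.add_apply, Pi.smul_apply, Pi.sub_apply] at hBij ⊢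
  have h2 : (2 : K)⁻¹ * 2 = 1 := inv_mul_cancel₀ two_ne_zero
  linear_combination hBij + (w i * w j) * hι - (A q i * A q j) * hs +
    (w i * w j * ι ^ 2 - A q i * A q j * s ^ 2) * h2

end Matrix

theorem Complex.two_cos_sub (φ ψ : ℂ) :
    2 * cos (φ - ψ) = exp (φ * I) / exp (ψ * I) + exp (ψ * I) / exp (φ * I) := by
  rw [two_cos, ← exp_sub, ← exp_sub]
  ring_nf

theorem rank_two_gram_param_general (n : ℕ) (G : Matrix (Fin n) (Fin n) ℂ)
    (hsymm : G.IsSymm) (hdiag : ∀ i, G i i = 2) (hrank : G.rank ≤ 2) :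
    ∃ φ : Fin n → ℂ, ∀ i j, G i j = 2 * Complex.cos (φ i - φ j) := by
  rcases isEmpty_or_nonempty (Fin n) with _ | ⟨⟨q⟩⟩
  · exact ⟨0, isEmptyElim⟩
  obtain ⟨u, v, rfl⟩ :=
    hsymm.exists_eq_vecMulVec_add_vecMulVec_of_rank_le_two hrank (q := q) (by simp [hdiag])
  have huv (i : Fin n) : u i * v i = 1 := by
    have := hdiag i
    simp only [Matrix.add_apply, vecMulVec_apply] at this
    linear_combination this / 2
  have hv (i : Fin n) : v i = (u i)⁻¹ := eq_inv_of_mul_eq_one_right (huv i)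
  have hu (i : Fin n) : ∃ φ, exp (φ * I) = u i :=
    ⟨log (u i) / I, by
      rw [div_mul_cancel₀ _ I_ne_zero, exp_log (left_ne_zero_of_mul_eq_one (huv i))]⟩
  choose φ hφ using hu
  refine ⟨φ, fun i j => ?_⟩
  rw [two_cos_sub, hφ, hφ, Matrix.add_apply, vecMulVec_apply, vecMulVec_apply, hv, hv]
  ring

/-- Every `n × n` complex symmetric matrix of rank at most `2` whose
diagonal entries all equal `2` can be written as `G_{ij} = 2 cos (φ_i − φ_j)`. -/
theorem rank_two_gram_param (n : ℕ) (hn : 1 ≤ n) (G : Matrix (Fin n) (Fin n) ℂ)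
    (hsymm : G.IsSymm) (hdiag : ∀ i, G i i = 2) (hrank : G.rank ≤ 2) :
    ∃ φ : Fin n → ℂ, ∀ i j, G i j = 2 * Complex.cos (φ i - φ j) :=
  rank_two_gram_param_general n G hsymm hdiag hrank
end

section
/- Let n ≥ 1 and consider the additive group A = ℂ / πℤ (the quotient of ℂ by the subgroup of integer multiples of π). For 1 ≤ i ≤ n define the automorphism T_i of A^{n+1} by T_i : φ_i ↦ 2φ_i − φ_{i+1}, φ_{i+1} ↦ φ_i, and φ_j ↦ φ_j for j ≠ i, i+1. Then the orbit of a point (φ_1, …, φ_{n+1}) ∈ A^{n+1} under the group generated by T_1, …, T_n is finite if and only if for every i with 1 ≤ i ≤ n, the difference φ_i − φ_{i+1} lies in the image of πℚ in A (i.e., each consecutive difference is a rational multiple of π modulo πℤ). -/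
/-- The additive group `A = ℂ / πℤ`. -/
abbrev Amod : Type := ℂ ⧸ AddSubgroup.zmultiples (Real.pi : ℂ)

/-- Forward action of `T_{i+1}` (0-indexed `i`) on `A^{n+1}`:
`φ_i ↦ 2φ_i − φ_{i+1}`, `φ_{i+1} ↦ φ_i`, fixing the other coordinates. -/
noncomputable def TFun (n : ℕ) (i : Fin n) (f : Fin (n + 1) → Amod) : Fin (n + 1) → Amod := fun j =>
  if j = i.castSucc then 2 • f i.castSucc - f i.succ
  else if j = i.succ then f i.castSucc
  else f j

/-- Inverse of `TFun`. -/
noncomputable def TInvFun (n : ℕ) (i : Fin n) (f : Fin (n + 1) → Amod) : Fin (n + 1) → Amod := fun j =>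
  if j = i.castSucc then f i.succ
  else if j = i.succ then 2 • f i.succ - f i.castSucc
  else f j

theorem TleftInv (n : ℕ) (i : Fin n) (f : Fin (n + 1) → Amod) :
    TInvFun n i (TFun n i f) = f := by
  have hne : i.castSucc ≠ i.succ := (Fin.castSucc_lt_succ : i.castSucc < i.succ).ne
  funext j
  by_cases h1 : j = i.castSucc
  · simp [TFun, TInvFun, h1, if_neg hne, if_neg (Ne.symm hne)]
  · by_cases h2 : j = i.succ
    · simp [TFun, TInvFun, h1, h2, if_neg hne, if_neg (Ne.symm hne)]
    · simp [TFun, TInvFun, h1, h2]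

theorem TrightInv (n : ℕ) (i : Fin n) (f : Fin (n + 1) → Amod) :
    TFun n i (TInvFun n i f) = f := by
  have hne : i.castSucc ≠ i.succ := (Fin.castSucc_lt_succ : i.castSucc < i.succ).ne
  funext j
  by_cases h1 : j = i.castSucc
  · simp [TFun, TInvFun, h1, if_neg hne, if_neg (Ne.symm hne)]
  · by_cases h2 : j = i.succ
    · simp [TFun, TInvFun, h1, h2, if_neg hne, if_neg (Ne.symm hne)]
    · simp [TFun, TInvFun, h1, h2]

/-- `T_{i+1}` as a permutation of `A^{n+1}`. -/
noncomputable def Tequiv (n : ℕ) (i : Fin n) : Equiv.Perm (Fin (n + 1) → Amod) :=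
  ⟨TFun n i, TInvFun n i, TleftInv n i, TrightInv n i⟩

/-!
Write `δᵢ ψ = ψᵢ - ψᵢ₊₁`. The map `Tᵢ` adds `δᵢ ψ` to both coordinates `i` and `i + 1`, which
leaves `δᵢ` unchanged, so `Tᵢ ^ k` adds `k • δᵢ φ`. Hence a finite orbit forces every `δᵢ φ` to have
finite order in `ℂ ⧸ πℤ`, and the elements of finite order there are exactly the rational multiples
of `π`. Conversely, finitely many elements of finite order generate a finite subgroup `D`, and the
finite set `φ + Dⁿ⁺¹` is stable under every `Tᵢ`, hence contains the orbit.
-/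

open QuotientAddGroup AddSubgroup Pointwise

theorem isOfFinAddOrder_iff_exists_rat {𝕜 : Type*} [Field 𝕜] [CharZero 𝕜] (p : 𝕜)
    (x : 𝕜 ⧸ zmultiples p) : IsOfFinAddOrder x ↔ ∃ q : ℚ, x = mk ((q : 𝕜) * p) := by
  obtain ⟨a, rfl⟩ := mk_surjective x
  constructor
  · intro h
    obtain ⟨m, hm, hma⟩ := isOfFinAddOrder_iff_zsmul_eq_zero.1 h
    rw [← mk_zsmul, eq_zero_iff, mem_zmultiples_iff] at hma
    obtain ⟨z, hz⟩ := hma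
    refine ⟨z / m, congrArg mk ?_⟩
    rw [zsmul_eq_mul, zsmul_eq_mul] at hz
    push_cast
    field_simp
    linear_combination -hz
  · rintro ⟨q, hq⟩
    refine isOfFinAddOrder_iff_nsmul_eq_zero.2 ⟨q.den, q.den_pos, ?_⟩
    rw [hq, ← mk_nsmul, eq_zero_iff, mem_zmultiples_iff]
    refine ⟨q.num, ?_⟩
    rw [zsmul_eq_mul, nsmul_eq_mul, ← mul_assoc]
    congr 1
    exact_mod_cast (Rat.mul_den_eq_num q).symm.trans (mul_comm _ _)

theorem AddCommGroup.finite_closure_of_isOfFinAddOrder {G : Type*} [AddCommGroup G] {s : Set G}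
    (hs : s.Finite) (h : ∀ x ∈ s, IsOfFinAddOrder x) : (closure s : Set G).Finite := by
  have : AddGroup.FG (closure s) :=
    (AddGroup.fg_iff_addSubgroup_fg _).2 ⟨hs.toFinset, by rw [hs.coe_toFinset]⟩
  have hle : closure s ≤ torsion G := (closure_le _).2 h
  have : Finite (closure s) := finite_of_fg_isAddTorsion _ fun x ↦
    AddSubmonoid.isOfFinAddOrder_coe.1 (hle x.2)
  exact Set.toFinite _

section ConsecDiff

variable {A : Type*} [AddCommGroup A] {n : ℕ}

def consecDiff (i : Fin n) : (Fin (n + 1) → A) →+ A :=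
  Pi.evalAddMonoidHom (fun _ ↦ A) i.castSucc - Pi.evalAddMonoidHom (fun _ ↦ A) i.succ

def pairSingle (i : Fin n) : A →+ (Fin (n + 1) → A) :=
  AddMonoidHom.single (fun _ ↦ A) i.castSucc + AddMonoidHom.single (fun _ ↦ A) i.succ

@[simp]
theorem consecDiff_apply (i : Fin n) (ψ : Fin (n + 1) → A) :
    consecDiff i ψ = ψ i.castSucc - ψ i.succ := rfl

@[simp]
theorem pairSingle_apply_castSucc (i : Fin n) (a : A) : pairSingle i a i.castSucc = a := by
  simp [pairSingle, Fin.castSucc_lt_succ.ne]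

@[simp]
theorem pairSingle_apply_succ (i : Fin n) (a : A) : pairSingle i a i.succ = a := by
  simp [pairSingle, Fin.castSucc_lt_succ.ne']

@[simp]
theorem consecDiff_pairSingle (i : Fin n) (a : A) : consecDiff i (pairSingle i a) = 0 := by
  simp

theorem consecDiff_mem_of_mem_pi {D : AddSubgroup A} (i : Fin n) {ψ : Fin (n + 1) → A}
    (hψ : ψ ∈ AddSubgroup.pi Set.univ fun _ ↦ D) : consecDiff i ψ ∈ D :=
  sub_mem (hψ _ trivial) (hψ _ trivial)

theorem pairSingle_mem_pi {D : AddSubgroup A} (i : Fin n) {a : A} (ha : a ∈ D) :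
    pairSingle i a ∈ AddSubgroup.pi Set.univ fun _ ↦ D :=
  add_mem ((AddSubgroup.single_mem_pi _ _).2 fun _ ↦ ha)
    ((AddSubgroup.single_mem_pi _ _).2 fun _ ↦ ha)

end ConsecDiff

namespace Tequiv

def orbit (n : ℕ) (φ : Fin (n + 1) → Amod) : Set (Fin (n + 1) → Amod) :=
  {ψ | ∃ T ∈ Subgroup.closure (Set.range (Tequiv n)), T φ = ψ}

variable {n : ℕ}

theorem apply_eq_add_pairSingle (i : Fin n) (ψ : Fin (n + 1) → Amod) :
    Tequiv n i ψ = ψ + pairSingle i (consecDiff i ψ) := by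
  funext j
  by_cases h₁ : j = i.castSucc
  · subst h₁
    simp only [Tequiv, Equiv.coe_fn_mk, TFun, ↓reduceIte, Pi.add_apply,
      pairSingle_apply_castSucc, consecDiff_apply, two_nsmul]
    abel
  by_cases h₂ : j = i.succ
  · subst h₂
    simp [Tequiv, TFun, Fin.castSucc_lt_succ.ne']
  · simp [Tequiv, TFun, pairSingle, h₁, h₂]

theorem consecDiff_apply_self (i : Fin n) (ψ : Fin (n + 1) → Amod) :
    consecDiff i (Tequiv n i ψ) = consecDiff i ψ := by
  rw [apply_eq_add_pairSingle, map_add, consecDiff_pairSingle, add_zero]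

theorem pow_apply (i : Fin n) (k : ℕ) (ψ : Fin (n + 1) → Amod) :
    (Tequiv n i ^ k) ψ = ψ + pairSingle i (k • consecDiff i ψ) := by
  induction k generalizing ψ with
  | zero => simp
  | succ k ih =>
    rw [pow_succ, Equiv.Perm.mul_apply, ih, consecDiff_apply_self, apply_eq_add_pairSingle,
      succ_nsmul, map_add, add_assoc, add_comm (pairSingle i _)]

theorem mem_stabilizer {D : AddSubgroup Amod} {φ : Fin (n + 1) → Amod} (i : Fin n)
    (hφ : consecDiff i φ ∈ D) :
    Tequiv n i ∈ MulAction.stabilizer (Equiv.Perm (Fin (n + 1) → Amod))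
      {ψ | ψ - φ ∈ AddSubgroup.pi Set.univ fun _ ↦ D} := by
  have hshift : ∀ ψ : Fin (n + 1) → Amod, ψ - φ ∈ AddSubgroup.pi Set.univ (fun _ ↦ D) →
      pairSingle i (consecDiff i ψ) ∈ AddSubgroup.pi Set.univ fun _ ↦ D := by
    intro ψ hψ
    rw [← sub_add_cancel ψ φ, map_add]
    exact pairSingle_mem_pi i (add_mem (consecDiff_mem_of_mem_pi i hψ) hφ)
  refine MulAction.mem_stabilizer_set.2 fun ψ ↦ ⟨fun h ↦ ?_, fun h ↦ ?_⟩
  · have hs := hshift _ h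
    rw [Equiv.Perm.smul_def, consecDiff_apply_self] at hs
    rw [Set.mem_ofPred_eq, Equiv.Perm.smul_def, apply_eq_add_pairSingle, add_sub_right_comm] at h
    exact (add_mem_cancel_right hs).1 h
  · rw [Set.mem_ofPred_eq, Equiv.Perm.smul_def, apply_eq_add_pairSingle, add_sub_right_comm]
    exact add_mem h (hshift ψ h)

theorem isOfFinAddOrder_consecDiff_of_finite_orbit {φ : Fin (n + 1) → Amod}
    (h : (orbit n φ).Finite) (i : Fin n) :
    IsOfFinAddOrder (consecDiff i φ) := by
  have hsub : Set.range (fun k : ℕ ↦ k • consecDiff i φ) ⊆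
      (fun ψ ↦ ψ i.castSucc - φ i.castSucc) '' orbit n φ := by
    rintro _ ⟨k, rfl⟩
    have hk : Tequiv n i ^ k ∈ Subgroup.closure (Set.range (Tequiv n)) :=
      pow_mem (Subgroup.subset_closure (Set.mem_range_self i)) k
    refine ⟨(Tequiv n i ^ k) φ, ⟨_, hk, rfl⟩, ?_⟩
    dsimp only
    rw [pow_apply, Pi.add_apply, pairSingle_apply_castSucc, add_sub_cancel_left]
  rw [← finite_multiples, AddSubmonoid.coe_multiples]
  exact (h.image _).subset hsub

theorem finite_orbit_of_isOfFinAddOrder {φ : Fin (n + 1) → Amod}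
    (h : ∀ i, IsOfFinAddOrder (consecDiff i φ)) : (orbit n φ).Finite := by
  set D := AddSubgroup.closure (Set.range fun i ↦ consecDiff i φ)
  set S := {ψ | ψ - φ ∈ AddSubgroup.pi Set.univ fun _ ↦ D}
  have hD : (D : Set Amod).Finite :=
    AddCommGroup.finite_closure_of_isOfFinAddOrder (Set.finite_range _) (Set.forall_mem_range.2 h)
  have hS : S.Finite :=
    (Set.Finite.pi fun _ ↦ hD).preimage sub_left_injective.injOn
  have hle : Subgroup.closure (Set.range (Tequiv n)) ≤
      MulAction.stabilizer (Equiv.Perm (Fin (n + 1) → Amod)) S :=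
    (Subgroup.closure_le _).2 <| Set.range_subset_iff.2 fun i ↦
      mem_stabilizer i (subset_closure ⟨i, rfl⟩)
  refine hS.subset ?_
  rintro _ ⟨T, hT, rfl⟩
  refine (MulAction.mem_stabilizer_set.1 (hle hT) φ).2 ?_
  simp [S]

end Tequiv

theorem finite_orbit_iff_rational_general (n : ℕ) (φ : Fin (n + 1) → Amod) :
    {ψ | ∃ T ∈ Subgroup.closure (Set.range (Tequiv n)), T φ = ψ}.Finite ↔
      ∀ i : Fin n, ∃ q : ℚ,
        φ i.castSucc - φ i.succ =
          (QuotientAddGroup.mk ((q : ℂ) * (Real.pi : ℂ)) : Amod) := by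
  simp only [← consecDiff_apply, ← isOfFinAddOrder_iff_exists_rat]
  exact ⟨Tequiv.isOfFinAddOrder_consecDiff_of_finite_orbit, Tequiv.finite_orbit_of_isOfFinAddOrder⟩

/-- The orbit of `(φ_1, …, φ_{n+1}) ∈ A^{n+1}` under the group
generated by `T_1, …, T_n` is finite iff every consecutive difference
`φ_i − φ_{i+1}` is a rational multiple of `π` modulo `πℤ`. -/
theorem finite_orbit_iff_rational (n : ℕ) (hn : 1 ≤ n) (φ : Fin (n + 1) → Amod) :
    {ψ | ∃ T ∈ Subgroup.closure (Set.range (Tequiv n)), T φ = ψ}.Finite ↔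
      ∀ i : Fin n, ∃ q : ℚ,
        φ i.castSucc - φ i.succ =
          (QuotientAddGroup.mk ((q : ℂ) * (Real.pi : ℂ)) : Amod) :=
  finite_orbit_iff_rational_general n φ
end

section
/- Let n ≥ 2 be even. Then the alternating bilinear form J on ℤ^n is non-degenerate (the map v ↦ J(v, ·) from ℤ^n to its dual is injective), and J is invariant under 𝒢_n: for every T ∈ 𝒢_n and all v, w ∈ ℤ^n, J(Tv, Tw) = J(v, w). -/
/-- The index `i - 1` as an element of `Fin n`. -/
def ipred {n : ℕ} (i : Fin n) : Fin n :=
  ⟨(i : ℕ) - 1, lt_of_le_of_lt (Nat.sub_le _ _) i.isLt⟩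

/-- Forward action of the generator `S_{i+1}` (0-indexed `i`) on `ℤ^n`:
for `i = 0` it is `k_0 ↦ k_0`, `k_j ↦ k_j + k_0` (`j ≠ 0`); for `i ≥ 1` it is
`k_{i-1} ↦ 2 k_{i-1} - k_i`, `k_i ↦ k_{i-1}`, fixing the other coordinates. -/
def SFun (n : ℕ) (i : Fin n) (v : Fin n → ℤ) : Fin n → ℤ := fun j =>
  if (i : ℕ) = 0 then (if (j : ℕ) = 0 then v j else v j + v i)
  else
    if j = ipred i then 2 * v j - v i
    else if j = i then v (ipred i) else v j

/-- Inverse of `SFun`. -/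
def SInvFun (n : ℕ) (i : Fin n) (w : Fin n → ℤ) : Fin n → ℤ := fun j =>
  if (i : ℕ) = 0 then (if (j : ℕ) = 0 then w j else w j - w i)
  else
    if j = ipred i then w i
    else if j = i then 2 * w i - w (ipred i) else w j

theorem ipred_ne {n : ℕ} (i : Fin n) (h : ¬ (i : ℕ) = 0) : ipred i ≠ i := by
  intro hc
  have := congrArg Fin.val hc
  simp [ipred] at this
  omega

theorem left_inv_S (n : ℕ) (i : Fin n) (v : Fin n → ℤ) : SInvFun n i (SFun n i v) = v := by
  by_cases h : (i : ℕ) = 0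
  · funext j
    have hi0 : (i : ℕ) = 0 → ((i : ℕ) = 0) := id
    by_cases hj : (j : ℕ) = 0
    · simp [SFun, SInvFun, h, hj]
    · have hji : j ≠ i := by intro hc; exact hj (by rw [hc]; exact h)
      simp [SFun, SInvFun, h, hj]
  · have hne := ipred_ne i h
    funext j
    by_cases h1 : j = ipred i
    · simp [SFun, SInvFun, h, h1, if_neg hne, if_neg (Ne.symm hne)]
    · by_cases h2 : j = i
      · simp [SFun, SInvFun, h, h1, h2, if_neg hne, if_neg (Ne.symm hne)]
        try ring
      · simp [SFun, SInvFun, h, h1, h2]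

theorem right_inv_S (n : ℕ) (i : Fin n) (v : Fin n → ℤ) : SFun n i (SInvFun n i v) = v := by
  by_cases h : (i : ℕ) = 0
  · funext j
    by_cases hj : (j : ℕ) = 0
    · simp [SFun, SInvFun, h, hj]
    · simp [SFun, SInvFun, h, hj]
  · have hne := ipred_ne i h
    funext j
    by_cases h1 : j = ipred i
    · simp [SFun, SInvFun, h, h1, if_neg hne, if_neg (Ne.symm hne)]
      try ring
    · by_cases h2 : j = i
      · simp [SFun, SInvFun, h, h1, h2, if_neg hne, if_neg (Ne.symm hne)]
      · simp [SFun, SInvFun, h, h1, h2]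

theorem map_add_S (n : ℕ) (i : Fin n) (v w : Fin n → ℤ) :
    SFun n i (v + w) = SFun n i v + SFun n i w := by
  funext j
  simp only [SFun, Pi.add_apply]
  split_ifs <;> ring

/-- The generator `S_{i+1}` as a `ℤ`-linear automorphism of `ℤ^n`. -/
def Sgen (n : ℕ) (i : Fin n) : (Fin n → ℤ) ≃ₗ[ℤ] (Fin n → ℤ) :=
  AddEquiv.toIntLinearEquiv
    { toFun := SFun n i
      invFun := SInvFun n i
      left_inv := left_inv_S n i
      right_inv := right_inv_S n i
      map_add' := map_add_S n i }

/-- The group `𝒢_n`: the subgroup of automorphisms of `ℤ^n` generated by `S_1, …, S_n`. -/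
def Gn (n : ℕ) : Subgroup ((Fin n → ℤ) ≃ₗ[ℤ] (Fin n → ℤ)) :=
  Subgroup.closure (Set.range (Sgen n))

/-- `x_i(v) = Σ_{j ≤ i} (−1)^{i−j} k_j` (0-indexed). -/
def xcoord {R : Type*} [CommRing R] {n : ℕ} (i : Fin n) (v : Fin n → R) : R :=
  ∑ j : Fin n, if j ≤ i then (-1 : R) ^ ((i : ℕ) - (j : ℕ)) * v j else 0

/-- The alternating form `J(v,w) = Σ_{i=1}^{n-1} (x_i(v) x_{i+1}(w) − x_{i+1}(v) x_i(w))`. -/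
def Jform {R : Type*} [CommRing R] {n : ℕ} (v w : Fin n → R) : R :=
  ∑ i : Fin n, if h : (i : ℕ) + 1 < n then
      xcoord i v * xcoord ⟨(i : ℕ) + 1, h⟩ w - xcoord ⟨(i : ℕ) + 1, h⟩ v * xcoord i w
    else 0

/-- `γ(v)`: the gcd of the coordinates. -/
def gam {n : ℕ} (v : Fin n → ℤ) : ℤ := Finset.univ.gcd v

open Classical in
/-- `α(v)`: the number of coordinates `i` with `k_i / γ(v)` odd. -/
noncomputable def alph {n : ℕ} (v : Fin n → ℤ) : ℕ :=
  (Finset.univ.filter fun i => Odd (v i / gam v)).card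

/-- `δ(v) = |2 α(v) − n − 1|`. -/
noncomputable def delt {n : ℕ} (v : Fin n → ℤ) : ℤ := |2 * (alph v : ℤ) - (n : ℤ) - 1|

/-- For odd `n`, the invariant `x(v) = k_1 − k_2 + ⋯ + k_n`. -/
def xalt {n : ℕ} (v : Fin n → ℤ) : ℤ := ∑ j : Fin n, (-1 : ℤ) ^ (j : ℕ) * v j

/-!
`J` is alternating, and each generator is a symplectic transvection for it:
`S_i v = v + J(v, b_i) • b_i` with `b_1 = (0, 1, …, 1)` and `b_i = e_{i-1} + e_i` for `i ≥ 2`,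
because `J(v, b_1) = k_1` (a telescoping sum, which needs `n` even) and `J(v, b_i) = k_{i-1} - k_i`.
Transvections preserve alternating forms, which gives invariance; and the same two identities
show that `J(v, ·) = 0` forces `k_1 = 0` and `k_{i-1} = k_i`, hence `v = 0`.
-/

section Transvection

variable {R M : Type*} [CommRing R] [AddCommGroup M] [Module R M]

theorem LinearMap.BilinForm.IsAlt.isOrthogonal_transvection {B : LinearMap.BilinForm R M}
    (hB : B.IsAlt) (a : M) : B.IsOrthogonal (LinearMap.transvection (B.flip a) a) := by
  intro x y
  have hflip : ∀ z, B.flip a z = B z a := fun _ => rfl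
  have hay : B a y = -B y a := (hB.neg_eq y a).symm
  simp only [LinearMap.transvection.apply, hflip, map_add, map_smul,
    LinearMap.add_apply, LinearMap.smul_apply, smul_eq_mul, hB.self_eq_zero, hay]
  ring

def LinearMap.BilinForm.orthogonalSubgroup (B : LinearMap.BilinForm R M) :
    Subgroup (M ≃ₗ[R] M) where
  carrier := {e | B.IsOrthogonal e}
  mul_mem' {e f} he hf x y := (he (f x) (f y)).trans (hf x y)
  one_mem' _ _ := rfl
  inv_mem' {e} he x y := by
    simpa using (he (e.symm x) (e.symm y)).symm

end Transvection

open Finset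

variable {R : Type*} [CommRing R] {n : ℕ}

def extendByZero (v : Fin n → R) (j : ℕ) : R := if h : j < n then v ⟨j, h⟩ else 0

theorem extendByZero_val (v : Fin n → R) (j : Fin n) : extendByZero v j = v j := by
  simp [extendByZero]

theorem sum_ite_val_eq_extendByZero (v : Fin n → R) (m : ℕ) :
    ∑ j : Fin n, (if (j : ℕ) = m then v j else 0) = extendByZero v m := by
  by_cases hm : m < n
  · rw [sum_eq_single ⟨m, hm⟩ (fun j _ hj => if_neg fun h => hj (Fin.ext h)) (by simp)]
    simp [extendByZero, hm]
  · rw [extendByZero, dif_neg hm]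
    exact sum_eq_zero fun j _ => if_neg (by omega)

def xcoordNat (v : Fin n → R) : ℕ → R
  | 0 => extendByZero v 0
  | m + 1 => extendByZero v (m + 1) - xcoordNat v m

theorem xcoord_eq_xcoordNat (i : Fin n) (v : Fin n → R) : xcoord i v = xcoordNat v i := by
  suffices h : ∀ m : ℕ,
      ∑ j : Fin n, (if (j : ℕ) ≤ m then (-1 : R) ^ (m - j) * v j else 0) = xcoordNat v m
    from h i
  intro m
  induction m with
  | zero => simpa [xcoordNat] using sum_ite_val_eq_extendByZero v 0
  | succ m ih =>
    have hterm : ∀ j : Fin n,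
        (if (j : ℕ) ≤ m + 1 then (-1 : R) ^ (m + 1 - j) * v j else 0) =
          (if (j : ℕ) = m + 1 then v j else 0) -
            (if (j : ℕ) ≤ m then (-1 : R) ^ (m - j) * v j else 0) := by
      intro j
      by_cases hj : (j : ℕ) ≤ m
      · rw [if_pos (by omega), if_neg (by omega), if_pos hj, Nat.sub_add_comm hj, pow_succ]
        ring
      · by_cases hj' : (j : ℕ) = m + 1
        · simp [hj']
        · rw [if_neg (by omega), if_neg hj', if_neg hj, sub_zero]
    rw [sum_congr rfl fun j _ => hterm j, sum_sub_distrib, ih,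
      sum_ite_val_eq_extendByZero]
    rfl

theorem Jform_eq_sum_range (v w : Fin n → R) :
    Jform v w = ∑ m ∈ range (n - 1),
      (xcoordNat v m * xcoordNat w (m + 1) - xcoordNat v (m + 1) * xcoordNat w m) := by
  rcases n with _ | n
  · simp [Jform]
  rw [Jform, Fin.sum_univ_castSucc]
  simp [xcoord_eq_xcoordNat, Fin.sum_univ_eq_sum_range (fun m =>
    xcoordNat v m * xcoordNat w (m + 1) - xcoordNat v (m + 1) * xcoordNat w m)]

theorem xcoord_add (i : Fin n) (v w : Fin n → R) :
    xcoord i (v + w) = xcoord i v + xcoord i w := by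
  simp only [xcoord, ← sum_add_distrib, Pi.add_apply]
  congr 1 with j
  split_ifs <;> ring

theorem xcoord_smul (i : Fin n) (c : R) (v : Fin n → R) :
    xcoord i (c • v) = c * xcoord i v := by
  simp only [xcoord, mul_sum, Pi.smul_apply, smul_eq_mul]
  congr 1 with j
  split_ifs <;> ring

variable (R n) in
def Jbilin : LinearMap.BilinForm R (Fin n → R) :=
  LinearMap.mk₂ R Jform
    (fun v v' w => by
      simp only [Jform, xcoord_add, ← sum_add_distrib]
      congr 1 with i
      split_ifs <;> ring)
    (fun c v w => by
      simp only [Jform, xcoord_smul, mul_sum, smul_eq_mul]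
      congr 1 with i
      split_ifs <;> ring)
    (fun v w w' => by
      simp only [Jform, xcoord_add, ← sum_add_distrib]
      congr 1 with i
      split_ifs <;> ring)
    (fun c v w => by
      simp only [Jform, xcoord_smul, mul_sum, smul_eq_mul]
      congr 1 with i
      split_ifs <;> ring)

@[simp]
theorem Jbilin_apply (v w : Fin n → R) : Jbilin R n v w = Jform v w := rfl

theorem Jbilin_isAlt : (Jbilin R n).IsAlt := fun v => by
  simp only [Jbilin_apply, Jform]
  exact sum_eq_zero fun i _ => by split_ifs <;> ring

variable (R n) in
def adjPair (p : ℕ) : Fin n → R := fun j => if (j : ℕ) = p ∨ (j : ℕ) = p + 1 then 1 else 0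

theorem xcoordNat_adjPair (p : ℕ) {m : ℕ} (hm : m < n) :
    xcoordNat (adjPair R n p) m = if m = p then 1 else 0 := by
  induction m with
  | zero => simp [xcoordNat, extendByZero, adjPair, hm, eq_comm]
  | succ m ih =>
    rw [xcoordNat, ih (by omega)]
    simp only [extendByZero, adjPair, dif_pos hm]
    split_ifs <;> first | (exfalso; omega) | ring

theorem Jform_adjPair (v : Fin n → R) {p : ℕ} (hp : p + 1 < n) :
    Jform v (adjPair R n p) = extendByZero v p - extendByZero v (p + 1) := by
  have hterm : ∀ m ∈ range (n - 1),
      xcoordNat v m * xcoordNat (adjPair R n p) (m + 1) -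
          xcoordNat v (m + 1) * xcoordNat (adjPair R n p) m =
        (if m + 1 = p then xcoordNat v m else 0) - if m = p then xcoordNat v (m + 1) else 0 := by
    intro m hm
    rw [mem_range] at hm
    rw [xcoordNat_adjPair p (by omega), xcoordNat_adjPair p (by omega)]
    split_ifs <;> ring
  rw [Jform_eq_sum_range, sum_congr rfl hterm, sum_sub_distrib,
    sum_ite_eq' _ p, if_pos (mem_range.mpr (by omega))]
  rcases p with _ | q
  · simp [xcoordNat]
  · simp only [Nat.add_right_cancel_iff]
    rw [sum_ite_eq', if_pos (mem_range.mpr (by omega)), xcoordNat, xcoordNat]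
    ring

variable (R n) in
def tailOnes : Fin n → R := fun j => if (j : ℕ) = 0 then 0 else 1

theorem xcoordNat_tailOnes {m : ℕ} (hm : m < n) :
    xcoordNat (tailOnes R n) m = if Even m then 0 else 1 := by
  induction m with
  | zero => simp [xcoordNat, extendByZero, tailOnes, hm]
  | succ m ih =>
    rw [xcoordNat, ih (by omega)]
    simp only [extendByZero, tailOnes, dif_pos hm, Nat.even_add_one]
    split_ifs <;> simp_all

theorem Jform_tailOnes (hn : Even n) (v : Fin n → R) :
    Jform v (tailOnes R n) = extendByZero v 0 := by
  rcases Nat.eq_zero_or_pos n with rfl | hpos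
  · simp [Jform, extendByZero]
  have hodd : ¬ Even (n - 1) := by
    obtain ⟨k, hk⟩ := hn
    rintro ⟨l, hl⟩
    omega
  have hterm : ∀ m ∈ range (n - 1),
      xcoordNat v m * xcoordNat (tailOnes R n) (m + 1) -
          xcoordNat v (m + 1) * xcoordNat (tailOnes R n) m =
        (if Even m then xcoordNat v m else 0) -
          if Even (m + 1) then xcoordNat v (m + 1) else 0 := by
    intro m hm
    rw [mem_range] at hm
    rw [xcoordNat_tailOnes (by omega), xcoordNat_tailOnes (by omega)]
    simp only [Nat.even_add_one]
    split_ifs <;> ring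
  rw [Jform_eq_sum_range, sum_congr rfl hterm, sum_range_sub']
  simp [hodd, xcoordNat]

variable (R) in
def transvectionVector (i : Fin n) : Fin n → R :=
  if (i : ℕ) = 0 then tailOnes R n else adjPair R n ((i : ℕ) - 1)

theorem Jform_transvectionVector (hn : Even n) (v : Fin n → R) (i : Fin n) :
    Jform v (transvectionVector R i) = if (i : ℕ) = 0 then v i else v (ipred i) - v i := by
  by_cases hi : (i : ℕ) = 0
  · rw [transvectionVector, if_pos hi, if_pos hi, Jform_tailOnes hn, ← hi, extendByZero_val]
  · rw [transvectionVector, if_neg hi, if_neg hi, Jform_adjPair v (by omega),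
      Nat.sub_add_cancel (Nat.one_le_iff_ne_zero.mpr hi), extendByZero_val]
    exact congrArg (· - v i) (extendByZero_val v (ipred i))

theorem Jbilin_separatingLeft (hn : Even n) : (Jbilin R n).SeparatingLeft := by
  intro u hu
  have hcoord := fun i => (Jform_transvectionVector hn u i).symm.trans (hu _)
  suffices h : ∀ m (hm : m < n), u ⟨m, hm⟩ = 0 from funext fun j => h j j.isLt
  intro m hm
  induction m with
  | zero => simpa using hcoord ⟨0, hm⟩
  | succ m ih =>
    have h := hcoord ⟨m + 1, hm⟩
    simp only [Nat.add_one_ne_zero, if_false] at h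
    rw [show ipred ⟨m + 1, hm⟩ = ⟨m, by omega⟩ from rfl, ih (by omega)] at h
    simpa using h

theorem Sgen_eq_transvection (hn : Even n) (i : Fin n) :
    ⇑(Sgen n i) = LinearMap.transvection ((Jbilin ℤ n).flip (transvectionVector ℤ i))
      (transvectionVector ℤ i) := by
  funext v j
  change SFun n i v j = v j + Jform v (transvectionVector ℤ i) * transvectionVector ℤ i j
  rw [Jform_transvectionVector hn]
  by_cases hi : (i : ℕ) = 0
  · simp only [SFun, transvectionVector, tailOnes, if_pos hi]
    split_ifs <;> ring
  · have hpred : (j : ℕ) = i - 1 ↔ j = ipred i := by rw [Fin.ext_iff]; rfl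
    have hself : (j : ℕ) = i - 1 + 1 ↔ j = i := by
      rw [Nat.sub_add_cancel (by omega), Fin.ext_iff]
    simp only [SFun, transvectionVector, adjPair, if_neg hi, hpred, hself]
    split_ifs <;> first | tauto | (subst_vars; ring)

theorem Gn_le_orthogonalSubgroup (hn : Even n) :
    Gn n ≤ (Jbilin ℤ n).orthogonalSubgroup := by
  refine Subgroup.closure_le _ |>.mpr (Set.range_subset_iff.mpr fun i => ?_)
  change (Jbilin ℤ n).IsOrthogonal (Sgen n i)
  rw [Sgen_eq_transvection hn]
  exact Jbilin_isAlt.isOrthogonal_transvection _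

theorem Jform_nondegenerate_and_invariant_general (n : ℕ) (heven : Even n) :
    Function.Injective (fun v : Fin n → ℤ => fun w : Fin n → ℤ => Jform v w) ∧
    ∀ T ∈ Gn n, ∀ v w : Fin n → ℤ, Jform (T v) (T w) = Jform v w := by
  constructor
  · intro v v' h
    refine sub_eq_zero.mp (Jbilin_separatingLeft heven (v - v') fun w => ?_)
    rw [LinearMap.map_sub₂, sub_eq_zero]
    exact congrFun h w
  · exact fun T hT => Gn_le_orthogonalSubgroup heven hT

/-- For even `n ≥ 2`, the alternating form `J` is non-degenerate
(`v ↦ J(v,·)` is injective) and invariant under `𝒢_n`. -/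
theorem Jform_nondegenerate_and_invariant (n : ℕ) (hn : 2 ≤ n) (heven : Even n) :
    Function.Injective (fun v : Fin n → ℤ => fun w : Fin n → ℤ => Jform v w) ∧
    ∀ T ∈ Gn n, ∀ v w : Fin n → ℤ, Jform (T v) (T w) = Jform v w :=
  Jform_nondegenerate_and_invariant_general n heven
end

section
/- Let s ≥ 1 and n = 2s + 1. For every T ∈ 𝒢_{2s+1} and every nonzero v ∈ ℤ^{2s+1}, one has γ(Tv) = γ(v), δ(Tv) = δ(v), and x(Tv) = x(v); that is, the triple (γ, δ, x) is invariant under the action of 𝒢_{2s+1} on ℤ^{2s+1}. -/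
/-!
The gcd `γ` is invariant under all of `GL(n, ℤ)`: the coordinates of `T v` are integer
combinations of those of `v`, and conversely. The linear form `x` and the quantity `δ` only
need to be checked on the generators. Each `S_i v - v` is a multiple of `(0, 1, …, 1)` or of
`e_{i-1} + e_i`, both killed by `x` when `n` is odd. For `δ`, write `v = γ u`: reduced mod 2,
`S_i` (`i ≥ 2`) swaps two coordinates of `u`, while `S_1` either fixes the parities of `u` or,
when `u_1` is odd, flips all of them except the first; this replaces `α` by `n + 1 - α`, which
leaves `|2α - n - 1|` unchanged.
-/

open Finset

section Gcd

variable {n : ℕ}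

theorem gam_dvd (v : Fin n → ℤ) (j : Fin n) : gam v ∣ v j :=
  gcd_dvd (mem_univ j)

theorem gam_eq_zero_iff {v : Fin n → ℤ} : gam v = 0 ↔ v = 0 := by
  simp [gam, Finset.gcd_eq_zero_iff, funext_iff]

theorem gam_dvd_gam_map {m : ℕ} (f : (Fin n → ℤ) →ₗ[ℤ] (Fin m → ℤ)) (v : Fin n → ℤ) :
    gam v ∣ gam (f v) := by
  refine dvd_gcd fun j _ => ?_
  rw [LinearMap.pi_apply_eq_sum_univ f v, Finset.sum_apply]
  exact dvd_sum fun i _ => dvd_mul_of_dvd_left (gam_dvd v i) _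

theorem gam_map_linearEquiv (T : (Fin n → ℤ) ≃ₗ[ℤ] (Fin n → ℤ)) (v : Fin n → ℤ) :
    gam (T v) = gam v :=
  dvd_antisymm_of_normalize_eq normalize_gcd normalize_gcd
    (by simpa using gam_dvd_gam_map T.symm.toLinearMap (T v))
    (gam_dvd_gam_map T.toLinearMap v)

end Gcd

def invariantSubgroup {G α β : Type*} [Group G] [MulAction G α] (f : α → β) : Subgroup G where
  carrier := {g | ∀ a, f (g • a) = f a}
  one_mem' a := by rw [one_smul]
  mul_mem' {g h} hg hh a := by rw [mul_smul, hg, hh]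
  inv_mem' {g} hg a := by rw [← hg (g⁻¹ • a), smul_inv_smul]

theorem Gn_le_invariantSubgroup {n : ℕ} {β : Type*} {f : (Fin n → ℤ) → β}
    (hf : ∀ i v, f (SFun n i v) = f v) : Gn n ≤ invariantSubgroup f :=
  (Subgroup.closure_le _).mpr <| by
    rintro _ ⟨i, rfl⟩ v
    exact hf i v

section SFun

variable {n : ℕ} {i : Fin n} (v : Fin n → ℤ)

theorem SFun_apply_of_val_eq_zero (hi : (i : ℕ) = 0) (j : Fin n) :
    SFun n i v j = if j = i then v j else v j + v i := by
  have hj : (j : ℕ) = 0 ↔ j = i := by rw [← hi, Fin.val_inj]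
  simp only [SFun, hi, hj, if_true]

theorem SFun_apply_ipred (hi : (i : ℕ) ≠ 0) : SFun n i v (ipred i) = 2 * v (ipred i) - v i := by
  simp [SFun, hi]

theorem SFun_apply_self (hi : (i : ℕ) ≠ 0) : SFun n i v i = v (ipred i) := by
  simp [SFun, hi, (ipred_ne i hi).symm]

theorem SFun_apply_of_ne (hi : (i : ℕ) ≠ 0) {j : Fin n} (hj₁ : j ≠ ipred i) (hj₂ : j ≠ i) :
    SFun n i v j = v j := by
  simp [SFun, hi, hj₁, hj₂]

theorem SFun_smul (c : ℤ) : SFun n i (c • v) = c • SFun n i v :=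
  (Sgen n i).map_smul c v

end SFun

section Alternating

variable {n : ℕ}

theorem xalt_add (v w : Fin n → ℤ) : xalt (v + w) = xalt v + xalt w := by
  simp [xalt, mul_add, sum_add_distrib]

theorem xalt_sub (v w : Fin n → ℤ) : xalt (v - w) = xalt v - xalt w := by
  simp [xalt, mul_sub, sum_sub_distrib]

theorem xalt_smul (c : ℤ) (v : Fin n → ℤ) : xalt (c • v) = c * xalt v := by
  simp [xalt, mul_sum, mul_left_comm]

theorem xalt_single (k : Fin n) : xalt (Pi.single k 1) = (-1) ^ (k : ℕ) := by
  simp [xalt, Pi.single_apply]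

theorem xalt_one (hn : Odd n) : xalt (1 : Fin n → ℤ) = 1 := by
  simp [xalt, Fin.sum_univ_eq_sum_range (fun j => (-1 : ℤ) ^ j), neg_one_geom_sum,
    Nat.not_even_iff_odd.mpr hn]

theorem xalt_SFun (hn : Odd n) (i : Fin n) (v : Fin n → ℤ) : xalt (SFun n i v) = xalt v := by
  by_cases hi : (i : ℕ) = 0
  · have h : SFun n i v = v + v i • (1 - Pi.single i 1) := by
      funext j
      by_cases hj : j = i
      · subst hj; simp [SFun_apply_of_val_eq_zero v hi]
      · simp [SFun_apply_of_val_eq_zero v hi, hj]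
    rw [h, xalt_add, xalt_smul, xalt_sub, xalt_one hn, xalt_single, hi, pow_zero, sub_self,
      mul_zero, add_zero]
  · have h : SFun n i v = v + (v (ipred i) - v i) • (Pi.single (ipred i) 1 + Pi.single i 1) := by
      funext j
      by_cases hj₁ : j = ipred i
      · subst hj₁; simp [SFun_apply_ipred v hi, ipred_ne i hi]; ring
      by_cases hj₂ : j = i
      · subst hj₂; simp [SFun_apply_self v hi, Ne.symm (ipred_ne j hi)]
      · simp [SFun_apply_of_ne v hi hj₁ hj₂, hj₁, hj₂]
    have hpow : (-1 : ℤ) ^ (ipred i : ℕ) + (-1) ^ (i : ℕ) = 0 := by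
      obtain ⟨k, hk⟩ := Nat.exists_eq_succ_of_ne_zero hi
      simp [ipred, hk, pow_succ]
    rw [h, xalt_add, xalt_smul, xalt_add, xalt_single, xalt_single, hpow, mul_zero, add_zero]

end Alternating

section Parity

variable {n : ℕ}

theorem alph_smul {g : ℤ} (hg : g ≠ 0) (w : Fin n → ℤ) (hgam : gam (g • w) = g) :
    alph (g • w) = #{j | Odd (w j)} := by
  unfold alph
  simp only [hgam, Pi.smul_apply, smul_eq_mul, Int.mul_ediv_cancel_left _ hg]

theorem card_odd_SFun_of_val_ne_zero {i : Fin n} (hi : (i : ℕ) ≠ 0) (u : Fin n → ℤ) :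
    #{j | Odd (SFun n i u j)} = #{j | Odd (u j)} := by
  refine card_equiv (Equiv.swap (ipred i) i) fun j => ?_
  simp only [mem_filter, mem_univ, true_and]
  by_cases hj₁ : j = ipred i
  · subst hj₁
    simp only [Equiv.swap_apply_left, SFun_apply_ipred u hi, Int.odd_iff]
    omega
  by_cases hj₂ : j = i
  · subst hj₂
    simp [SFun_apply_self u hi]
  · rw [Equiv.swap_apply_of_ne_of_ne hj₁ hj₂, SFun_apply_of_ne u hi hj₁ hj₂]

theorem card_odd_SFun_of_val_eq_zero_of_even {i : Fin n} (hi : (i : ℕ) = 0) {u : Fin n → ℤ}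
    (hu : Even (u i)) : #{j | Odd (SFun n i u j)} = #{j | Odd (u j)} := by
  refine congrArg card (filter_congr fun j _ => ?_)
  rw [SFun_apply_of_val_eq_zero u hi]
  split_ifs <;> simp [parity_simps, hu]

theorem card_odd_SFun_of_val_eq_zero_of_odd {i : Fin n} (hi : (i : ℕ) = 0) {u : Fin n → ℤ}
    (hu : Odd (u i)) : #{j | Odd (SFun n i u j)} + #{j | Odd (u j)} = n + 1 := by
  have hset : filter (fun j => Odd (SFun n i u j)) univ =
      insert i (filter (fun j => ¬ Odd (u j)) univ) := by
    ext j
    simp only [mem_filter, mem_univ, true_and, mem_insert, SFun_apply_of_val_eq_zero u hi]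
    by_cases hj : j = i
    · subst hj; simp [hu]
    · rw [Int.odd_iff] at hu
      simp only [hj, if_false, false_or, Int.odd_iff]
      omega
  have hsplit := card_filter_add_card_filter_not (s := univ) (fun j => Odd (u j))
  rw [hset, card_insert_of_notMem (by simp [hu]), card_univ, Fintype.card_fin] at *
  omega

theorem card_odd_SFun (i : Fin n) (u : Fin n → ℤ) :
    #{j | Odd (SFun n i u j)} = #{j | Odd (u j)} ∨
      #{j | Odd (SFun n i u j)} + #{j | Odd (u j)} = n + 1 := by
  by_cases hi : (i : ℕ) = 0
  · obtain hu | hu := Int.even_or_odd (u i)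
    · exact .inl (card_odd_SFun_of_val_eq_zero_of_even hi hu)
    · exact .inr (card_odd_SFun_of_val_eq_zero_of_odd hi hu)
  · exact .inl (card_odd_SFun_of_val_ne_zero hi u)

end Parity

theorem abs_two_mul_sub_eq_of_eq_or_add_eq {a b n : ℕ} (h : a = b ∨ a + b = n + 1) :
    |2 * (a : ℤ) - n - 1| = |2 * (b : ℤ) - n - 1| := by
  obtain rfl | h := h
  · rfl
  · rw [show 2 * (a : ℤ) - n - 1 = -(2 * b - n - 1) by omega, abs_neg]

theorem delt_SFun {n : ℕ} (i : Fin n) (v : Fin n → ℤ) : delt (SFun n i v) = delt v := by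
  obtain rfl | hv := eq_or_ne v 0
  · rw [show SFun n i 0 = 0 from (Sgen n i).map_zero]
  have hg : gam v ≠ 0 := gam_eq_zero_iff.not.mpr hv
  obtain ⟨u, hvu⟩ : ∃ u, v = gam v • u :=
    ⟨fun j => v j / gam v, funext fun j => (Int.mul_ediv_cancel' (gam_dvd v j)).symm⟩
  have hgam_Su : gam (gam v • SFun n i u) = gam v := by
    rw [← SFun_smul, ← hvu]
    exact gam_map_linearEquiv (Sgen n i) v
  have hα : alph v = #{j | Odd (u j)} :=
    (congrArg alph hvu).trans (alph_smul hg u (congrArg gam hvu.symm))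
  have hα' : alph (SFun n i v) = #{j | Odd (SFun n i u j)} := by
    rw [congrArg (SFun n i) hvu, SFun_smul]
    exact alph_smul hg _ hgam_Su
  unfold delt
  rw [hα, hα']
  exact abs_two_mul_sub_eq_of_eq_or_add_eq (card_odd_SFun i u)

theorem gam_delt_xalt_invariant_general (s : ℕ) :
    ∀ T ∈ Gn (2 * s + 1), ∀ v : Fin (2 * s + 1) → ℤ, v ≠ 0 →
      gam (T v) = gam v ∧ delt (T v) = delt v ∧ xalt (T v) = xalt v := by
  intro T hT v _
  exact ⟨gam_map_linearEquiv T v, Gn_le_invariantSubgroup delt_SFun hT v,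
    Gn_le_invariantSubgroup (xalt_SFun (odd_two_mul_add_one s)) hT v⟩

/-- For `n = 2s + 1`, the triple `(γ, δ, x)` is invariant under the
action of `𝒢_{2s+1}` on `ℤ^{2s+1}`. -/
theorem gam_delt_xalt_invariant (s : ℕ) (hs : 1 ≤ s) :
    ∀ T ∈ Gn (2 * s + 1), ∀ v : Fin (2 * s + 1) → ℤ, v ≠ 0 →
      gam (T v) = gam v ∧ delt (T v) = delt v ∧ xalt (T v) = xalt v :=
  gam_delt_xalt_invariant_general s
end

section
/- Let n ≥ 2. For every i with 1 ≤ i ≤ n − 1, the automorphisms S_i and S_{i+1} of ℤ^n satisfy the relation (S_i S_{i+1} S_i)^4 = 1, i.e., the fourth power of the composite S_i ∘ S_{i+1} ∘ S_i is the identity map of ℤ^n. -/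
/-! For `(i : ℕ) ≠ 0` the composite `T = S_i S_{i+1} S_i` fixes every coordinate outside
`(k_{i-1}, k_i, k_{i+1})` and acts on that block by `M = [[2, -2, 1], [2, -1, 0], [1, 0, 0]]`,
and `M ^ 2 = [[1, -2, 2], [2, -3, 2], [2, -2, 1]]` is an involution.
For `(i : ℕ) = 0` it acts on `(k_0, k_1)` by `[[1, -1], [2, -1]]`, whose square is `-1`, and translates
every other coordinate by the functional `f = 2 k_0 - k_1`; since `f ∘ T ^ 2 = -f`, the four
translations of `T ^ 4` cancel. -/

section Generators

variable {n : ℕ} (i : Fin n) (v : Fin n → ℤ)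

theorem Sgen_apply_self_of_val_eq_zero (hi : (i : ℕ) = 0) : Sgen n i v i = v i := by
  simp [Sgen, SFun, hi]

theorem Sgen_apply_of_val_eq_zero_of_ne (hi : (i : ℕ) = 0) {j : Fin n} (hj : j ≠ i) :
    Sgen n i v j = v j + v i := by
  have hj0 : (j : ℕ) ≠ 0 := fun h0 => hj (Fin.ext (h0.trans hi.symm))
  simp [Sgen, SFun, hi, hj0]

theorem Sgen_apply_ipred (hi : (i : ℕ) ≠ 0) :
    Sgen n i v (ipred i) = 2 * v (ipred i) - v i := by
  simp [Sgen, SFun, hi]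

theorem Sgen_apply_self (hi : (i : ℕ) ≠ 0) : Sgen n i v i = v (ipred i) := by
  simp [Sgen, SFun, hi, (ipred_ne i hi).symm]

theorem Sgen_apply_of_ne (hi : (i : ℕ) ≠ 0) {j : Fin n} (hjp : j ≠ ipred i) (hj : j ≠ i) :
    Sgen n i v j = v j := by
  simp [Sgen, SFun, hi, hjp, hj]

end Generators

section BraidCube

variable {n : ℕ} (i : Fin n) (h : (i : ℕ) + 1 < n) (v : Fin n → ℤ)

theorem ipred_mk_succ : ipred (⟨(i : ℕ) + 1, h⟩ : Fin n) = i :=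
  Fin.ext (by simp [ipred])

theorem mk_succ_ne_self : (⟨(i : ℕ) + 1, h⟩ : Fin n) ≠ i :=
  fun hc => by simpa using congrArg Fin.val hc

theorem mk_succ_ne_ipred : (⟨(i : ℕ) + 1, h⟩ : Fin n) ≠ ipred i :=
  fun hc => by have := congrArg Fin.val hc; simp [ipred] at this; omega

theorem Sgen_mk_succ_apply_left :
    Sgen n ⟨(i : ℕ) + 1, h⟩ v i = 2 * v i - v ⟨(i : ℕ) + 1, h⟩ := by
  simpa [ipred_mk_succ] using Sgen_apply_ipred (n := n) ⟨(i : ℕ) + 1, h⟩ v (by simp)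

theorem Sgen_mk_succ_apply_right : Sgen n ⟨(i : ℕ) + 1, h⟩ v ⟨(i : ℕ) + 1, h⟩ = v i := by
  simpa [ipred_mk_succ] using Sgen_apply_self (n := n) ⟨(i : ℕ) + 1, h⟩ v (by simp)

theorem Sgen_mk_succ_apply_of_ne {j : Fin n} (hji : j ≠ i) (hjs : j ≠ ⟨(i : ℕ) + 1, h⟩) :
    Sgen n ⟨(i : ℕ) + 1, h⟩ v j = v j :=
  Sgen_apply_of_ne _ v (by simp) (by rwa [ipred_mk_succ]) hjs

theorem braidCube_apply_self_of_val_eq_zero (hi : (i : ℕ) = 0) :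
    (Sgen n i * Sgen n ⟨(i : ℕ) + 1, h⟩ * Sgen n i) v i = v i - v ⟨(i : ℕ) + 1, h⟩ := by
  simp only [LinearEquiv.mul_apply, Sgen_apply_self_of_val_eq_zero i _ hi,
    Sgen_mk_succ_apply_left, Sgen_apply_of_val_eq_zero_of_ne i _ hi (mk_succ_ne_self i h)]
  ring

theorem braidCube_apply_mk_succ_of_val_eq_zero (hi : (i : ℕ) = 0) :
    (Sgen n i * Sgen n ⟨(i : ℕ) + 1, h⟩ * Sgen n i) v ⟨(i : ℕ) + 1, h⟩ =
      2 * v i - v ⟨(i : ℕ) + 1, h⟩ := by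
  simp only [LinearEquiv.mul_apply, Sgen_apply_of_val_eq_zero_of_ne i _ hi (mk_succ_ne_self i h),
    Sgen_mk_succ_apply_right, Sgen_apply_self_of_val_eq_zero i _ hi, Sgen_mk_succ_apply_left]
  ring

theorem braidCube_apply_of_val_eq_zero_of_ne (hi : (i : ℕ) = 0) {j : Fin n} (hji : j ≠ i)
    (hjs : j ≠ ⟨(i : ℕ) + 1, h⟩) :
    (Sgen n i * Sgen n ⟨(i : ℕ) + 1, h⟩ * Sgen n i) v j = v j + 2 * v i - v ⟨(i : ℕ) + 1, h⟩ := by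
  simp only [LinearEquiv.mul_apply, Sgen_apply_of_val_eq_zero_of_ne i _ hi hji,
    Sgen_mk_succ_apply_of_ne i h _ hji hjs, Sgen_mk_succ_apply_left,
    Sgen_apply_self_of_val_eq_zero i _ hi, Sgen_apply_of_val_eq_zero_of_ne i _ hi (mk_succ_ne_self i h)]
  ring

theorem braidCube_apply_ipred (hi : (i : ℕ) ≠ 0) :
    (Sgen n i * Sgen n ⟨(i : ℕ) + 1, h⟩ * Sgen n i) v (ipred i) =
      2 * v (ipred i) - 2 * v i + v ⟨(i : ℕ) + 1, h⟩ := by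
  simp only [LinearEquiv.mul_apply, Sgen_apply_ipred i _ hi,
    Sgen_mk_succ_apply_of_ne i h _ (ipred_ne i hi) (mk_succ_ne_ipred i h).symm,
    Sgen_mk_succ_apply_left, Sgen_apply_self i _ hi,
    Sgen_apply_of_ne i _ hi (mk_succ_ne_ipred i h) (mk_succ_ne_self i h)]
  ring

theorem braidCube_apply_self (hi : (i : ℕ) ≠ 0) :
    (Sgen n i * Sgen n ⟨(i : ℕ) + 1, h⟩ * Sgen n i) v i = 2 * v (ipred i) - v i := by
  simp only [LinearEquiv.mul_apply, Sgen_apply_self i _ hi, Sgen_apply_ipred i _ hi,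
    Sgen_mk_succ_apply_of_ne i h _ (ipred_ne i hi) (mk_succ_ne_ipred i h).symm]

theorem braidCube_apply_mk_succ (hi : (i : ℕ) ≠ 0) :
    (Sgen n i * Sgen n ⟨(i : ℕ) + 1, h⟩ * Sgen n i) v ⟨(i : ℕ) + 1, h⟩ = v (ipred i) := by
  simp only [LinearEquiv.mul_apply, Sgen_mk_succ_apply_right, Sgen_apply_self i _ hi,
    Sgen_apply_of_ne i _ hi (mk_succ_ne_ipred i h) (mk_succ_ne_self i h)]

theorem braidCube_apply_of_ne (hi : (i : ℕ) ≠ 0) {j : Fin n} (hjp : j ≠ ipred i) (hji : j ≠ i)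
    (hjs : j ≠ ⟨(i : ℕ) + 1, h⟩) :
    (Sgen n i * Sgen n ⟨(i : ℕ) + 1, h⟩ * Sgen n i) v j = v j := by
  simp only [LinearEquiv.mul_apply, Sgen_apply_of_ne i _ hi hjp hji,
    Sgen_mk_succ_apply_of_ne i h _ hji hjs]

theorem braidCube_pow_four_apply_of_val_eq_zero (hi : (i : ℕ) = 0) (j : Fin n) :
    ((Sgen n i * Sgen n ⟨(i : ℕ) + 1, h⟩ * Sgen n i) ^ 4) v j = v j := by
  simp only [LinearEquiv.pow_apply, Function.iterate_succ_apply', Function.iterate_zero_apply]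
  by_cases hji : j = i
  · rw [hji]
    simp only [braidCube_apply_self_of_val_eq_zero i h _ hi,
      braidCube_apply_mk_succ_of_val_eq_zero i h _ hi]
    ring
  by_cases hjs : j = ⟨(i : ℕ) + 1, h⟩
  · rw [hjs]
    simp only [braidCube_apply_self_of_val_eq_zero i h _ hi,
      braidCube_apply_mk_succ_of_val_eq_zero i h _ hi]
    ring
  simp only [braidCube_apply_of_val_eq_zero_of_ne i h _ hi hji hjs,
    braidCube_apply_self_of_val_eq_zero i h _ hi, braidCube_apply_mk_succ_of_val_eq_zero i h _ hi]
  ring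

theorem braidCube_pow_four_apply (hi : (i : ℕ) ≠ 0) (j : Fin n) :
    ((Sgen n i * Sgen n ⟨(i : ℕ) + 1, h⟩ * Sgen n i) ^ 4) v j = v j := by
  simp only [LinearEquiv.pow_apply, Function.iterate_succ_apply', Function.iterate_zero_apply]
  by_cases hjp : j = ipred i
  · rw [hjp]
    simp only [braidCube_apply_ipred i h _ hi, braidCube_apply_self i h _ hi,
      braidCube_apply_mk_succ i h _ hi]
    ring
  by_cases hji : j = i
  · rw [hji]
    simp only [braidCube_apply_ipred i h _ hi, braidCube_apply_self i h _ hi,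
      braidCube_apply_mk_succ i h _ hi]
    ring
  by_cases hjs : j = ⟨(i : ℕ) + 1, h⟩
  · rw [hjs]
    simp only [braidCube_apply_ipred i h _ hi, braidCube_apply_self i h _ hi,
      braidCube_apply_mk_succ i h _ hi]
    ring
  simp only [braidCube_apply_of_ne i h _ hi hjp hji hjs]

end BraidCube

theorem braid_rel_four_general (n : ℕ) (i : Fin n) (h : (i : ℕ) + 1 < n) :
    (Sgen n i * Sgen n ⟨(i : ℕ) + 1, h⟩ * Sgen n i) ^ 4 = 1 := by
  ext v j
  by_cases hi : (i : ℕ) = 0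
  · exact braidCube_pow_four_apply_of_val_eq_zero i h v hi j
  · exact braidCube_pow_four_apply i h v hi j

/-- The relation `(S_i S_{i+1} S_i)^4 = 1` holds for consecutive
generators acting on `ℤ^n`. -/
theorem braid_rel_four (n : ℕ) (hn : 2 ≤ n) (i : Fin n) (h : (i : ℕ) + 1 < n) :
    (Sgen n i * Sgen n ⟨(i : ℕ) + 1, h⟩ * Sgen n i) ^ 4 = 1 :=
  braid_rel_four_general n i h
end

section
/- Let n ≥ 2. For every k ≥ 1 and every i ≥ 1 with i + 2k − 1 ≤ n, the automorphisms S_i, S_{i+1}, …, S_{i+2k−1} of ℤ^n satisfy the relation (S_i S_{i+1} ⋯ S_{i+2k−1})^{2(2k+1)} = 1, i.e., the 2(2k+1)-th power of the composite S_i ∘ S_{i+1} ∘ ⋯ ∘ S_{i+2k−1} is the identity map of ℤ^n. -/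
/-!
Number the generators from `0`, as `Sgen` does. The composite `P` of the `2k` generators acts
on `2k + 1` suitable linear coordinates `y₀, …, y_{2k}` of `ℤ^n` as the negacyclic shift
`(y₀, …, y_{2k}) ↦ (-y_{2k}, y₀, …, y_{2k-1})`, whose `(2k+1)`-st power is `-1`, and it
leaves invariant enough further linear forms to determine a vector together with the `y_t`.

* For generators `i, …, i + 2k - 1` with `i ≥ 1`, put `a = i - 1` and let `s` be the alternating
  sum of `k_a, …, k_{a+2k}`. Then `P` preserves `s` and every `k_l` outside that window, and
  `y_t = k_{a+t} - s`.
* For generators `0, …, 2k - 1`, let `s` be the alternating sum of `k_0, …, k_{2k-1}`. Then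
  `y_t = k_t + s` for `t < 2k`, `y_{2k} = -s`, and `P` preserves every `k_l + s` with `l ≥ 2k`.
-/

section NegacyclicShift

variable {X : Type*} (F : X → X) (r : ℕ → X → ℤ) (L : ℕ)

structure IsNegacyclicShift : Prop where
  head : ∀ x, r 0 (F x) = -r L x
  shift : ∀ x t, t < L → r (t + 1) (F x) = r t x

variable {F r L}

theorem IsNegacyclicShift.apply_iterate (hF : IsNegacyclicShift F r L) {t j : ℕ}
    (h : t + j ≤ L) (x : X) : r (t + j) (F^[j] x) = r t x := by
  induction j with
  | zero => rfl
  | succ j ih =>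
    rw [Function.iterate_succ_apply', ← add_assoc, hF.shift _ _ (by omega), ih (by omega)]

theorem IsNegacyclicShift.apply_iterate_succ (hF : IsNegacyclicShift F r L) {t : ℕ}
    (ht : t ≤ L) (x : X) : r t (F^[L + 1] x) = -r t x := by
  obtain ⟨s, rfl⟩ := Nat.exists_eq_add_of_le ht
  calc r t (F^[t + s + 1] x) = r (0 + t) (F^[t] (F (F^[s] x))) := by
        rw [zero_add, add_assoc, Function.iterate_add_apply, Function.iterate_succ_apply']
    _ = -r (t + s) (F^[s] x) := by rw [hF.apply_iterate (by omega), hF.head]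
    _ = -r t x := by rw [hF.apply_iterate le_rfl]

theorem IsNegacyclicShift.apply_iterate_period (hF : IsNegacyclicShift F r L) {t : ℕ}
    (ht : t ≤ L) (x : X) : r t (F^[2 * (L + 1)] x) = r t x := by
  rw [two_mul, Function.iterate_add_apply, hF.apply_iterate_succ ht,
    hF.apply_iterate_succ ht, neg_neg]

end NegacyclicShift

theorem iterate_apply_of_invariant {X Y : Type*} {F : X → X} {g : X → Y}
    (hg : ∀ x, g (F x) = g x) (j : ℕ) (x : X) : g (F^[j] x) = g x := by
  induction j with
  | zero => rfl
  | succ j ih => rw [Function.iterate_succ_apply', hg, ih]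

section Coordinates

variable {n : ℕ}

/-- The coordinates of `v`, indexed by `ℕ` and extended by zero beyond `n`. -/
def coord (v : Fin n → ℤ) (l : ℕ) : ℤ := if h : l < n then v ⟨l, h⟩ else 0

theorem coord_val (v : Fin n → ℤ) (l : Fin n) : coord v l = v l := dif_pos l.isLt

theorem ext_coord {v w : Fin n → ℤ} (h : ∀ l < n, coord v l = coord w l) : v = w :=
  funext fun l => by simpa only [coord_val] using h l l.isLt

def altSum (v : Fin n → ℤ) (a m : ℕ) : ℤ :=
  ∑ t ∈ Finset.range m, (-1) ^ t * coord v (a + t)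

theorem altSum_succ (v : Fin n → ℤ) (a m : ℕ) :
    altSum v a (m + 1) = altSum v a m + (-1) ^ m * coord v (a + m) :=
  Finset.sum_range_succ _ _

theorem altSum_succ' (v : Fin n → ℤ) (a m : ℕ) :
    altSum v a (m + 1) = coord v a - altSum v (a + 1) m := by
  simp only [altSum, Finset.sum_range_succ', pow_succ, add_assoc, add_comm 1, add_zero, pow_zero,
    one_mul, mul_neg_one, neg_mul, Finset.sum_neg_distrib]
  ring

theorem altSum_congr {v w : Fin n → ℤ} {a b m : ℕ}
    (h : ∀ t < m, coord w (b + t) = coord v (a + t)) : altSum w b m = altSum v a m :=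
  Finset.sum_congr rfl fun t ht => by rw [h t (Finset.mem_range.mp ht)]

theorem Sgen_apply (q : Fin n) (v : Fin n → ℤ) : Sgen n q v = SFun n q v := rfl

theorem coord_Sgen_of_val_eq_succ {q : Fin n} {a : ℕ} (hq : (q : ℕ) = a + 1) (v : Fin n → ℤ)
    (l : ℕ) :
    coord (Sgen n q v) l =
      if l = a then 2 * coord v a - coord v (a + 1)
      else if l = a + 1 then coord v a else coord v l := by
  obtain ⟨q, hqn⟩ := q
  subst hq
  unfold coord
  split_ifs <;> simp_all [Sgen_apply, SFun, ipred, Fin.ext_iff] <;> omega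

theorem coord_Sgen_of_val_eq_zero {q : Fin n} (hq : (q : ℕ) = 0) (v : Fin n → ℤ) {l : ℕ}
    (hl : l < n) :
    coord (Sgen n q v) l = if l = 0 then coord v 0 else coord v l + coord v 0 := by
  obtain ⟨q, hqn⟩ := q
  subst hq
  unfold coord
  split_ifs <;> simp_all [Sgen_apply, SFun]

def prodSgen {m : ℕ} (f : Fin m → Fin n) : (Fin n → ℤ) ≃ₗ[ℤ] (Fin n → ℤ) :=
  (List.ofFn fun t => Sgen n (f t)).prod

theorem coord_prodSgen_consecutive (a : ℕ) {m : ℕ} (f : Fin m → Fin n)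
    (hf : ∀ t, (f t : ℕ) = a + 1 + t) (v : Fin n → ℤ) (l : ℕ) :
    coord (prodSgen f v) l =
      if l = a then 2 * altSum v a (m + 1) - (-1) ^ m * coord v (a + m)
      else if a < l ∧ l ≤ a + m then coord v (l - 1) else coord v l := by
  induction m generalizing v with
  | zero =>
    rw [altSum_succ]
    simp only [prodSgen, List.ofFn_zero, List.prod_nil, LinearEquiv.coe_one, id, altSum,
      Finset.range_zero, Finset.sum_empty, pow_zero, one_mul, add_zero, zero_add]
    split_ifs <;> first | rfl | omega | (subst_vars; ring)
  | succ m ih =>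
    set w := Sgen n (f (Fin.last m)) v
    have hw := coord_Sgen_of_val_eq_succ (a := a + m) (by rw [hf, Fin.val_last]; omega) v
    have hsum : altSum w a m = altSum v a m :=
      altSum_congr fun t ht => by rw [hw]; split_ifs <;> omega
    rw [prodSgen, List.ofFn_succ', List.prod_concat, LinearEquiv.mul_apply]
    rw [← prodSgen, ih (fun t => f t.castSucc) (fun t => hf _), altSum_succ, altSum_succ,
      altSum_succ, hsum, hw, hw, hw]
    split_ifs <;> first | omega | (congr 1; omega) | (simp only [pow_succ, ← add_assoc]; ring)

section Consecutive

variable (a k : ℕ) (f : Fin (2 * k) → Fin n) (hf : ∀ t, (f t : ℕ) = a + 1 + t)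
include hf

theorem coord_prodSgen_consecutive_head (v : Fin n → ℤ) :
    coord (prodSgen f v) a = 2 * altSum v a (2 * k + 1) - coord v (a + 2 * k) := by
  rw [coord_prodSgen_consecutive a f hf, if_pos rfl, pow_mul, neg_one_sq, one_pow, one_mul]

theorem coord_prodSgen_consecutive_shift (v : Fin n → ℤ) {t : ℕ} (ht : t < 2 * k) :
    coord (prodSgen f v) (a + (t + 1)) = coord v (a + t) := by
  rw [coord_prodSgen_consecutive a f hf, if_neg (by omega), if_pos (by omega)]
  congr 1

theorem coord_prodSgen_consecutive_of_not_mem (v : Fin n → ℤ) {l : ℕ}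
    (hl : ¬(a ≤ l ∧ l ≤ a + 2 * k)) : coord (prodSgen f v) l = coord v l := by
  rw [coord_prodSgen_consecutive a f hf, if_neg (by omega), if_neg (by omega)]

theorem altSum_prodSgen_consecutive (v : Fin n → ℤ) :
    altSum (prodSgen f v) a (2 * k + 1) = altSum v a (2 * k + 1) := by
  have hshift : altSum (prodSgen f v) (a + 1) (2 * k) = altSum v a (2 * k) :=
    altSum_congr fun t ht => by
      rw [add_assoc, add_comm 1, coord_prodSgen_consecutive_shift a k f hf v ht]
  rw [altSum_succ', hshift, coord_prodSgen_consecutive_head a k f hf, altSum_succ, pow_mul,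
    neg_one_sq, one_pow, one_mul]
  ring

theorem prodSgen_consecutive_pow_eq_one : prodSgen f ^ (2 * (2 * k + 1)) = 1 := by
  have hneg : IsNegacyclicShift (prodSgen f)
      (fun t v => coord v (a + t) - altSum v a (2 * k + 1)) (2 * k) :=
    { head := fun v => by
        rw [add_zero, coord_prodSgen_consecutive_head a k f hf,
          altSum_prodSgen_consecutive a k f hf, altSum_succ, pow_mul, neg_one_sq, one_pow, one_mul]
        ring
      shift := fun v t ht => by
        rw [coord_prodSgen_consecutive_shift a k f hf v ht, altSum_prodSgen_consecutive a k f hf] }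
  refine LinearEquiv.ext fun v => ext_coord fun l _ => ?_
  rw [LinearEquiv.pow_apply]
  by_cases hl : a ≤ l ∧ l ≤ a + 2 * k
  · obtain ⟨t, rfl⟩ := Nat.exists_eq_add_of_le hl.1
    have hcoord := hneg.apply_iterate_period (show t ≤ 2 * k by omega) v
    have halt := iterate_apply_of_invariant (g := fun v => altSum v a (2 * k + 1))
      (altSum_prodSgen_consecutive a k f hf) (2 * (2 * k + 1)) v
    simp only [halt, sub_left_inj] at hcoord
    exact hcoord
  · exact iterate_apply_of_invariant (g := fun v => coord v l)
      (fun v => coord_prodSgen_consecutive_of_not_mem a k f hf v hl) _ v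

end Consecutive

section FromZero

theorem lt_of_forall_val_eq {m : ℕ} (f : Fin (m + 1) → Fin n)
    (hf : ∀ t, (f t : ℕ) = t) : m < n := by
  simpa [hf] using (f (Fin.last m)).isLt

variable {m : ℕ} (hm : Odd m) (f : Fin (m + 1) → Fin n) (hf : ∀ t, (f t : ℕ) = t)
include hm hf

theorem coord_prodSgen_from_zero (v : Fin n → ℤ) {l : ℕ} (hl : l < n) :
    coord (prodSgen f v) l =
      (if l = 0 then 0 else if l ≤ m then coord v (l - 1) else coord v l) +
        (2 * altSum v 0 (m + 1) + coord v m) := by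
  have hQ := coord_prodSgen_consecutive 0 (fun t : Fin m => f t.succ)
    (fun t => by rw [hf, Fin.val_succ]; ring) v
  have hsplit : prodSgen f = Sgen n (f 0) * prodSgen fun t : Fin m => f t.succ := by
    simp only [prodSgen, List.ofFn_succ, List.prod_cons]
  rw [hsplit, LinearEquiv.mul_apply, coord_Sgen_of_val_eq_zero (hf 0) _ hl, hQ, hQ, if_pos rfl,
    hm.neg_one_pow]
  simp only [zero_add]
  split_ifs <;> omega

theorem coord_prodSgen_from_zero_head (v : Fin n → ℤ) :
    coord (prodSgen f v) 0 = 2 * altSum v 0 (m + 1) + coord v m := by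
  have := lt_of_forall_val_eq f hf
  rw [coord_prodSgen_from_zero hm f hf v (by omega), if_pos rfl, zero_add]

theorem coord_prodSgen_from_zero_shift (v : Fin n → ℤ) {t : ℕ} (ht : t < m) :
    coord (prodSgen f v) (t + 1) = coord v t + (2 * altSum v 0 (m + 1) + coord v m) := by
  have := lt_of_forall_val_eq f hf
  rw [coord_prodSgen_from_zero hm f hf v (by omega), if_neg (by omega), if_pos (by omega),
    Nat.add_sub_cancel]

theorem altSum_prodSgen_from_zero (v : Fin n → ℤ) :
    altSum (prodSgen f v) 0 (m + 1) = -(altSum v 0 (m + 1) + coord v m) := by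
  have hshift : altSum (prodSgen f v) 1 m =
      altSum v 0 m + (2 * altSum v 0 (m + 1) + coord v m) * ∑ t ∈ Finset.range m, (-1) ^ t := by
    rw [Finset.mul_sum, altSum, altSum, ← Finset.sum_add_distrib]
    refine Finset.sum_congr rfl fun t ht => ?_
    rw [add_comm 1, coord_prodSgen_from_zero_shift hm f hf v (Finset.mem_range.mp ht), zero_add]
    ring
  rw [altSum_succ', hshift, coord_prodSgen_from_zero_head hm f hf, neg_one_geom_sum,
    if_neg (Nat.not_even_iff_odd.mpr hm), altSum_succ, hm.neg_one_pow, zero_add]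
  ring

theorem coord_add_altSum_prodSgen_from_zero (v : Fin n → ℤ) {l : ℕ} (hml : m < l)
    (hl : l < n) :
    coord (prodSgen f v) l + altSum (prodSgen f v) 0 (m + 1) = coord v l + altSum v 0 (m + 1) := by
  rw [coord_prodSgen_from_zero hm f hf v hl, if_neg (by omega), if_neg (by omega),
    altSum_prodSgen_from_zero hm f hf]
  ring

theorem prodSgen_from_zero_pow_eq_one : prodSgen f ^ (2 * (m + 1 + 1)) = 1 := by
  have hneg : IsNegacyclicShift (prodSgen f)
      (fun t v => if t ≤ m then coord v t + altSum v 0 (m + 1) else -altSum v 0 (m + 1))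
      (m + 1) :=
    { head := fun v => by
        simp only [if_pos (Nat.zero_le m), if_neg (show ¬m + 1 ≤ m by omega),
          coord_prodSgen_from_zero_head hm f hf, altSum_prodSgen_from_zero hm f hf]
        ring
      shift := fun v t ht => by
        by_cases htm : t < m
        · simp only [if_pos (show t + 1 ≤ m by omega), if_pos htm.le,
            coord_prodSgen_from_zero_shift hm f hf v htm, altSum_prodSgen_from_zero hm f hf]
          ring
        · obtain rfl : t = m := by omega
          simp only [if_neg (show ¬t + 1 ≤ t by omega), if_pos le_rfl,
            altSum_prodSgen_from_zero hm f hf]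
          ring }
  refine LinearEquiv.ext fun v => ext_coord fun l hl => ?_
  rw [LinearEquiv.pow_apply]
  have halt : altSum ((⇑(prodSgen f))^[2 * (m + 1 + 1)] v) 0 (m + 1) = altSum v 0 (m + 1) := by
    simpa using hneg.apply_iterate_period le_rfl v
  by_cases hlm : l ≤ m
  · simpa [hlm, halt] using hneg.apply_iterate_period (show l ≤ m + 1 by omega) v
  · simpa [halt] using iterate_apply_of_invariant
      (g := fun v => coord v l + altSum v 0 (m + 1))
      (fun v => coord_add_altSum_prodSgen_from_zero hm f hf v (by omega) hl) (2 * (m + 1 + 1)) v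

end FromZero

end Coordinates

/-- For any `2k` consecutive generators `S_{i}, …, S_{i+2k-1}`
(0-indexed here, with `i + 2k ≤ n`), the `2(2k+1)`-st power of their composite is the
identity. -/
theorem braid_rel_long (n : ℕ) (k i : ℕ)
    (h : i + 2 * k ≤ n) :
    ((List.ofFn fun t : Fin (2 * k) =>
        Sgen n ⟨i + (t : ℕ), by have := t.isLt; omega⟩).prod) ^ (2 * (2 * k + 1)) =
      1 := by
  rcases i with _ | p
  · rcases k with _ | k
    · simp
    · exact prodSgen_from_zero_pow_eq_one (m := 2 * k + 1) (odd_two_mul_add_one k) _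
        fun t => zero_add _
  · exact prodSgen_consecutive_pow_eq_one p k _ fun t => rfl
end

section
/- Let n ≥ 2 and let r : GL(n, ℤ) → GL(n, ℤ/2ℤ) denote entrywise reduction modulo 2. Then the image r(𝒢_n) of the group 𝒢_n under this reduction is isomorphic to the symmetric group S_{n+1} on n+1 letters; specifically, r(𝒢_n) equals { M(π) : π a permutation of {0,1,…,n} }, where M(π)_{ij} = δ_{i,π(j)} + δ_{0,π(j)} over ℤ/2ℤ, and r(S_i) = M(τ_i) with τ_i the transposition exchanging i−1 and i. -/
/-- The matrix `M(π)` over `ℤ/2ℤ` attached to a permutation `π` of `{0,1,…,n}`,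
with rows and columns indexed by `{1,…,n}` (realized as `Fin n` via `Fin.succ`):
`M(π)_{ij} = δ_{i,π(j)} + δ_{0,π(j)}`. -/
def Mperm (n : ℕ) (π : Equiv.Perm (Fin (n + 1))) : Matrix (Fin n) (Fin n) (ZMod 2) :=
  Matrix.of fun i j =>
    (if (i.succ : Fin (n + 1)) = π j.succ then 1 else 0) +
    (if (0 : Fin (n + 1)) = π j.succ then 1 else 0)

/-!
Reduction modulo 2 is a monoid homomorphism on `GL(n, ℤ)`. The matrix `M(π)` is the matrix of
the permutation action of `π` on `(ℤ/2)^{n+1} / ⟨(1, …, 1)⟩ ≅ (ℤ/2)^n`, where `e_0 ≡ e_1 + ⋯ + e_n`,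
so `π ↦ M(π)` is a homomorphism too. A direct computation shows that `S_i` reduces to
`M(τ_i)`; since the `τ_i` are involutions generating `S_{n+1}` as a monoid, the image of the group
generated by the `S_i` is exactly the image of `M`.
-/

def reductionModTwo (n : ℕ) :
    ((Fin n → ℤ) ≃ₗ[ℤ] (Fin n → ℤ)) →* Matrix (Fin n) (Fin n) (ZMod 2) :=
  (Int.castRingHom (ZMod 2)).mapMatrix.toMonoidHom.comp <|
    (LinearMap.toMatrixAlgEquiv' : _ ≃ₐ[ℤ] Matrix (Fin n) (Fin n) ℤ).toMonoidHom.comp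
      LinearEquiv.automorphismGroup.toLinearMapMonoidHom

/-- The quotient map `(ℤ/2)^{n+1} → (ℤ/2)^{n+1} / ⟨(1, …, 1)⟩ ≅ (ℤ/2)^n`. -/
def quotOnesMatrix (n : ℕ) : Matrix (Fin n) (Fin (n + 1)) (ZMod 2) :=
  Matrix.of fun i a => (if i.succ = a then 1 else 0) + (if 0 = a then 1 else 0)

theorem Mperm_apply (n : ℕ) (π : Equiv.Perm (Fin (n + 1))) (i j : Fin n) :
    Mperm n π i j = quotOnesMatrix n i (π j.succ) :=
  rfl

theorem quotOnesMatrix_zero (n : ℕ) (i : Fin n) : quotOnesMatrix n i 0 = 1 := by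
  simp [quotOnesMatrix, Fin.succ_ne_zero]

theorem quotOnesMatrix_succ (n : ℕ) (i k : Fin n) :
    quotOnesMatrix n i k.succ = (1 : Matrix (Fin n) (Fin n) (ZMod 2)) i k := by
  simp [quotOnesMatrix, Matrix.one_apply, (Fin.succ_ne_zero k).symm]

theorem sum_quotOnesMatrix_row (n : ℕ) (i : Fin n) : ∑ a, quotOnesMatrix n i a = 0 := by
  simp only [quotOnesMatrix, Matrix.of_apply, Finset.sum_add_distrib, Finset.sum_ite_eq,
    Finset.mem_univ, if_true]
  decide

theorem sum_quotOnesMatrix_comp (n : ℕ) (π : Equiv.Perm (Fin (n + 1))) (i : Fin n)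
    (b : Fin (n + 1)) :
    ∑ k : Fin n, quotOnesMatrix n i (π k.succ) * quotOnesMatrix n k b =
      quotOnesMatrix n i (π b) := by
  induction b using Fin.cases with
  | zero =>
    have hrow : quotOnesMatrix n i (π 0) + ∑ k : Fin n, quotOnesMatrix n i (π k.succ) = 0 := by
      rw [← Fin.sum_univ_succ (f := fun a => quotOnesMatrix n i (π a)),
        Equiv.sum_comp π (quotOnesMatrix n i), sum_quotOnesMatrix_row]
    simp only [quotOnesMatrix_zero, mul_one]
    exact (CharTwo.add_eq_zero.mp hrow).symm
  | succ t =>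
    simp [quotOnesMatrix_succ, Matrix.one_apply]

theorem Mperm_one (n : ℕ) : Mperm n 1 = 1 := by
  ext i j
  exact quotOnesMatrix_succ n i j

theorem Mperm_mul (n : ℕ) (π σ : Equiv.Perm (Fin (n + 1))) :
    Mperm n (π * σ) = Mperm n π * Mperm n σ := by
  ext i j
  simp only [Matrix.mul_apply, Mperm_apply, Equiv.Perm.mul_apply, sum_quotOnesMatrix_comp]

def MpermHom (n : ℕ) : Equiv.Perm (Fin (n + 1)) →* Matrix (Fin n) (Fin n) (ZMod 2) where
  toFun := Mperm n
  map_one' := Mperm_one n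
  map_mul' := Mperm_mul n

theorem reductionModTwo_Sgen (n : ℕ) (i : Fin n) :
    reductionModTwo n (Sgen n i) = Mperm n (Equiv.swap i.castSucc i.succ) := by
  ext a b
  change ((SFun n i (Pi.single b 1) a : ℤ) : ZMod 2) = quotOnesMatrix n a _
  simp only [SFun, ipred, Pi.single_apply, quotOnesMatrix, Matrix.of_apply, Equiv.swap_apply_def,
    Fin.ext_iff, apply_ite Fin.val, Fin.val_succ, Fin.val_castSucc, Fin.val_zero]
  split_ifs <;> first | contradiction | omega | decide

theorem MonoidHom.map_inv_eq_self_of_mul_self {G M : Type*} [Group G] [Monoid M] (f : G →* M)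
    {g : G} (hg : f g * f g = 1) : f g⁻¹ = f g :=
  calc f g⁻¹ = f g⁻¹ * (f g * f g) := by rw [hg, mul_one]
    _ = f g := by rw [← mul_assoc, ← map_mul, inv_mul_cancel, map_one, one_mul]

theorem reductionModTwo_Sgen_inv (n : ℕ) (i : Fin n) :
    reductionModTwo n (Sgen n i)⁻¹ = Mperm n (Equiv.swap i.castSucc i.succ) := by
  have hsq : reductionModTwo n (Sgen n i) * reductionModTwo n (Sgen n i) = 1 := by
    rw [reductionModTwo_Sgen, ← Mperm_mul, Equiv.swap_mul_self, Mperm_one]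
  rw [MonoidHom.map_inv_eq_self_of_mul_self _ hsq, reductionModTwo_Sgen]

theorem reductionModTwo_image_Gn (n : ℕ) :
    reductionModTwo n '' Gn n = Set.range (Mperm n) := by
  have hgen : reductionModTwo n '' (Set.range (Sgen n) ∪ (Set.range (Sgen n))⁻¹) =
      MpermHom n '' Set.range fun i : Fin n => Equiv.swap i.castSucc i.succ := by
    rw [Set.image_union, Set.inv_range, ← Set.range_comp, ← Set.range_comp, ← Set.range_comp]
    have hinv : reductionModTwo n ∘ (fun i => (Sgen n i)⁻¹) = reductionModTwo n ∘ Sgen n :=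
      funext fun i => (reductionModTwo_Sgen_inv n i).trans (reductionModTwo_Sgen n i).symm
    rw [hinv, Set.union_self]
    exact congrArg Set.range (funext (reductionModTwo_Sgen n))
  calc reductionModTwo n '' Gn n = (Gn n).toSubmonoid.map (reductionModTwo n) := rfl
    _ = (⊤ : Submonoid _).map (MpermHom n) := by
      rw [Gn, Subgroup.closure_toSubmonoid, MonoidHom.map_mclosure, hgen,
        ← MonoidHom.map_mclosure, Equiv.Perm.mclosure_swap_castSucc_succ]
    _ = Set.range (Mperm n) := by rw [← MonoidHom.mrange_eq_map, MonoidHom.coe_mrange]; rfl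

theorem Gn_mod_two_general (n : ℕ) :
    (∀ i : Fin n,
        (LinearMap.toMatrix' (Sgen n i).toLinearMap).map (Int.cast : ℤ → ZMod 2) =
          Mperm n (Equiv.swap i.castSucc i.succ)) ∧
    (fun T : (Fin n → ℤ) ≃ₗ[ℤ] (Fin n → ℤ) =>
        (LinearMap.toMatrix' T.toLinearMap).map (Int.cast : ℤ → ZMod 2)) '' ↑(Gn n) =
      Set.range (Mperm n) :=
  ⟨reductionModTwo_Sgen n, reductionModTwo_image_Gn n⟩

/-- The image of `𝒢_n` under entrywise reduction modulo `2` equals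
`{M(π) : π ∈ S_{n+1}}` (hence is isomorphic to `S_{n+1}`), and the generator `S_i`
reduces to `M(τ_i)` with `τ_i` the transposition exchanging `i − 1` and `i`. -/
theorem Gn_mod_two (n : ℕ) (hn : 2 ≤ n) :
    (∀ i : Fin n,
        (LinearMap.toMatrix' (Sgen n i).toLinearMap).map (Int.cast : ℤ → ZMod 2) =
          Mperm n (Equiv.swap i.castSucc i.succ)) ∧
    (fun T : (Fin n → ℤ) ≃ₗ[ℤ] (Fin n → ℤ) =>
        (LinearMap.toMatrix' T.toLinearMap).map (Int.cast : ℤ → ZMod 2)) '' ↑(Gn n) =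
      Set.range (Mperm n) :=
  Gn_mod_two_general n
end
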